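/- For all indices i,k ∈ {1,2,3}, every fixed t > 0 and every fixed x ∈ ℝ³ with x ≠ 0, the time-dependent Stokeslet velocity converges to the Eulerlet velocity in the inviscid limit: lim_{ν → 0⁺} u^S_{ki}(x,t) = −(1/(4π)) · ∂²(1/‖x‖)/∂x_k∂x_i. (This expresses that as the local Reynolds number tends to infinity the viscous term drops out and the fundamental solution tends toward the Eulerlet.) -/

import Mathlib

open Real MeasureTheory

noncomputable section

/-- `ℝ³` as a Euclidean space. -/
abbrev E3 := EuclideanSpace ℝ (Fin 3)

/-- The `i`-th standard basis vector of `ℝ³`. -/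
def e3 (i : Fin 3) : E3 := EuclideanSpace.single i 1

/-- Partial derivative of `f : ℝ³ → ℝ` in the `i`-th coordinate direction. -/
def pd (i : Fin 3) (f : E3 → ℝ) (x : E3) : ℝ := fderiv ℝ f x (e3 i)

/-- The three-dimensional heat kernel `Φ(x,t) = (4πνt)^(−3/2) exp(−‖x‖²/(4νt))`. -/
def heatKernel (ν : ℝ) (x : E3) (t : ℝ) : ℝ :=
  (4 * π * ν * t) ^ (-(3 : ℝ) / 2) * Real.exp (-‖x‖ ^ 2 / (4 * ν * t))

/-- The error function `erf y = (2/√π) ∫₀^y exp(−s²) ds`. -/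
def erf (y : ℝ) : ℝ := (2 / Real.sqrt π) * ∫ s in (0 : ℝ)..y, Real.exp (-s ^ 2)

/-- The Stokeslet scalar potential `S(x,t) = erf(‖x‖/√(4νt))/‖x‖`. -/
def stokesPot (ν : ℝ) (x : E3) (t : ℝ) : ℝ := erf (‖x‖ / Real.sqrt (4 * ν * t)) / ‖x‖

/-- The time-dependent Stokeslet velocity
`u^S_{ki}(x,t) = (1/(4πν)) ∂S/∂t δ_{ki} − (1/(4π)) ∂²S/∂x_k∂x_i`. -/
def stokeslet (ν : ℝ) (k i : Fin 3) (x : E3) (t : ℝ) : ℝ :=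
  (1 / (4 * π * ν)) * deriv (fun s => stokesPot ν x s) t * (if k = i then 1 else 0)
    - (1 / (4 * π)) * pd k (fun y => pd i (fun z => stokesPot ν z t) y) x

open Filter Topology

def Ef (y : ℝ) : ℝ := (2 / Real.sqrt π) * Real.exp (-y ^ 2)

lemma hasDerivAt_erf (y : ℝ) : HasDerivAt erf (Ef y) y := by
  have hcont : Continuous fun s : ℝ => Real.exp (-s ^ 2) := by continuity
  have h : HasDerivAt (fun u : ℝ => ∫ s in (0 : ℝ)..u, Real.exp (-s ^ 2))
      (Real.exp (-y ^ 2)) y :=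
    intervalIntegral.integral_hasDerivAt_right (hcont.intervalIntegrable _ _)
      (hcont.stronglyMeasurableAtFilter _ _) hcont.continuousAt
  rw [show erf = fun y => (2 / Real.sqrt π) * ∫ s in (0 : ℝ)..y, Real.exp (-s ^ 2) from rfl]
  simpa [erf, Ef, mul_comm] using h.const_mul (2 / Real.sqrt π)

lemma hasDerivAt_Ef (y : ℝ) : HasDerivAt Ef (-(2 * y) * Ef y) y := by
  have h : HasDerivAt (fun y : ℝ => -y ^ 2) (-(2 * y)) y := by
    simpa using ((hasDerivAt_pow 2 y).fun_neg)
  have := (Real.hasDerivAt_exp (-y ^ 2)).comp y h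
  have h2 := this.const_mul (2 / Real.sqrt π)
  refine h2.congr_deriv ?_
  simp only [Ef]; ring

lemma erf_tendsto_one : Tendsto erf atTop (𝓝 1) := by
  have hint : IntegrableOn (fun s : ℝ => Real.exp (-s ^ 2)) (Set.Ioi 0) := by
    have := (integrable_exp_neg_mul_sq (one_pos)).integrableOn (s := Set.Ioi (0:ℝ))
    simpa using this
  have h := intervalIntegral_tendsto_integral_Ioi 0 hint tendsto_id
  have hval : ∫ s in Set.Ioi (0:ℝ), Real.exp (-s ^ 2) = Real.sqrt π / 2 := by
    have := integral_gaussian_Ioi 1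
    simpa using this
  rw [hval] at h
  have := h.const_mul (2 / Real.sqrt π)
  have hne : Real.sqrt π ≠ 0 := by positivity
  have : Tendsto erf atTop (𝓝 (2 / Real.sqrt π * (Real.sqrt π / 2))) := by
    rw [show erf = fun y => (2 / Real.sqrt π) * ∫ s in (0 : ℝ)..y, Real.exp (-s ^ 2) from rfl]
    simpa [erf] using this
  convert this using 2
  field_simp
  try ring

def hfun (c q : ℝ) : ℝ := erf (Real.sqrt q / c) / Real.sqrt q

def h1 (c q : ℝ) : ℝ :=
  Ef (Real.sqrt q / c) / (2 * c * q) - erf (Real.sqrt q / c) / (2 * Real.sqrt q * q)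

def h2 (c q : ℝ) : ℝ :=
  -Ef (Real.sqrt q / c) * (1 / (2 * c ^ 3 * q) + 3 / (4 * c * q ^ 2))
    + 3 * erf (Real.sqrt q / c) * Real.sqrt q / (4 * q ^ 3)

def gf (q : ℝ) : ℝ := 1 / Real.sqrt q

def g1 (q : ℝ) : ℝ := -(1 / (2 * Real.sqrt q * q))

def g2 (q : ℝ) : ℝ := 3 * Real.sqrt q / (4 * q ^ 3)

lemma hasDerivAt_hfun {c q : ℝ} (hc : 0 < c) (hq : 0 < q) :
    HasDerivAt (hfun c) (h1 c q) q := by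
  have hs0 : Real.sqrt q ≠ 0 := by positivity
  have hsq : HasDerivAt Real.sqrt (1 / (2 * Real.sqrt q)) q := Real.hasDerivAt_sqrt hq.ne'
  have hy : HasDerivAt (fun q : ℝ => Real.sqrt q / c) (1 / (2 * Real.sqrt q) / c) q :=
    hsq.div_const c
  have herf : HasDerivAt (fun q : ℝ => erf (Real.sqrt q / c))
      (Ef (Real.sqrt q / c) * (1 / (2 * Real.sqrt q) / c)) q :=
    (hasDerivAt_erf _).comp q hy
  have h := herf.div hsq hs0
  refine h.congr_deriv ?_
  have hqs : q = Real.sqrt q ^ 2 := (Real.sq_sqrt hq.le).symm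
  set s := Real.sqrt q with hsdef
  rw [h1, hqs]
  rw [Real.sqrt_sq (show (0:ℝ) ≤ s from Real.sqrt_nonneg q)]
  field_simp
  try ring

lemma hasDerivAt_h1 {c q : ℝ} (hc : 0 < c) (hq : 0 < q) :
    HasDerivAt (fun q => h1 c q) (h2 c q) q := by
  have hs0 : Real.sqrt q ≠ 0 := by positivity
  have hsq : HasDerivAt Real.sqrt (1 / (2 * Real.sqrt q)) q := Real.hasDerivAt_sqrt hq.ne'
  have hy : HasDerivAt (fun q : ℝ => Real.sqrt q / c) (1 / (2 * Real.sqrt q) / c) q :=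
    hsq.div_const c
  have herf : HasDerivAt (fun q : ℝ => erf (Real.sqrt q / c))
      (Ef (Real.sqrt q / c) * (1 / (2 * Real.sqrt q) / c)) q :=
    (hasDerivAt_erf _).comp q hy
  have hEf : HasDerivAt (fun q : ℝ => Ef (Real.sqrt q / c))
      (-(2 * (Real.sqrt q / c)) * Ef (Real.sqrt q / c) * (1 / (2 * Real.sqrt q) / c)) q :=
    (hasDerivAt_Ef _).comp q hy
  have hden1 : HasDerivAt (fun q : ℝ => 2 * c * q) (2 * c) q := by
    simpa using (hasDerivAt_id q).const_mul (2 * c)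
  have hden2 : HasDerivAt (fun q : ℝ => 2 * Real.sqrt q * q)
      (2 * (1 / (2 * Real.sqrt q)) * q + 2 * Real.sqrt q * 1) q :=
    (hsq.const_mul 2).mul (hasDerivAt_id q)
  have hA := hEf.div hden1 (by positivity)
  have hB := herf.div hden2 (by positivity)
  have h := hA.sub hB
  refine h.congr_deriv ?_
  have hqs : q = Real.sqrt q ^ 2 := (Real.sq_sqrt hq.le).symm
  set s := Real.sqrt q with hsdef
  rw [h2, hqs]
  rw [Real.sqrt_sq (show (0:ℝ) ≤ s from Real.sqrt_nonneg q)]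
  field_simp
  try ring

lemma hasDerivAt_gf {q : ℝ} (hq : 0 < q) : HasDerivAt gf (g1 q) q := by
  have hs0 : Real.sqrt q ≠ 0 := by positivity
  have hsq : HasDerivAt Real.sqrt (1 / (2 * Real.sqrt q)) q := Real.hasDerivAt_sqrt hq.ne'
  have h := (hasDerivAt_const q (1:ℝ)).div hsq hs0
  refine h.congr_deriv ?_
  have hqs : q = Real.sqrt q ^ 2 := (Real.sq_sqrt hq.le).symm
  set s := Real.sqrt q with hsdef
  rw [g1, hqs]
  rw [Real.sqrt_sq (show (0:ℝ) ≤ s from Real.sqrt_nonneg q)]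
  field_simp
  try ring

lemma hasDerivAt_g1 {q : ℝ} (hq : 0 < q) : HasDerivAt g1 (g2 q) q := by
  have hs0 : Real.sqrt q ≠ 0 := by positivity
  have hsq : HasDerivAt Real.sqrt (1 / (2 * Real.sqrt q)) q := Real.hasDerivAt_sqrt hq.ne'
  have hden2 : HasDerivAt (fun q : ℝ => 2 * Real.sqrt q * q)
      (2 * (1 / (2 * Real.sqrt q)) * q + 2 * Real.sqrt q * 1) q :=
    (hsq.const_mul 2).mul (hasDerivAt_id q)
  have h := (((hasDerivAt_const q (1:ℝ)).div hden2 (by positivity))).neg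
  refine h.congr_deriv ?_
  have hqs : q = Real.sqrt q ^ 2 := (Real.sq_sqrt hq.le).symm
  set s := Real.sqrt q with hsdef
  rw [g2, hqs]
  rw [Real.sqrt_sq (show (0:ℝ) ≤ s from Real.sqrt_nonneg q)]
  field_simp
  try ring

lemma sq_tendsto : Tendsto (fun c : ℝ => c ^ 2) (𝓝[>] 0) (𝓝[>] 0) := by
  apply tendsto_nhdsWithin_of_tendsto_nhds_of_eventually_within
  · have : Tendsto (fun c : ℝ => c ^ 2) (𝓝 0) (𝓝 (0 ^ 2)) :=
      (continuous_pow 2).tendsto 0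
    simpa using this.mono_left nhdsWithin_le_nhds
  · filter_upwards [self_mem_nhdsWithin] with c (hc : 0 < c)
    exact pow_pos hc 2

lemma expLimit {q : ℝ} (hq : 0 < q) (n : ℕ) :
    Tendsto (fun c : ℝ => Real.exp (-(q / c ^ 2)) / c ^ n) (𝓝[>] 0) (𝓝 0) := by
  have hu : Tendsto (fun c : ℝ => (c ^ 2)⁻¹) (𝓝[>] 0) atTop :=
    tendsto_inv_nhdsGT_zero.comp sq_tendsto
  have hG : Tendsto (fun u : ℝ => u ^ ((n : ℝ) / 2) * Real.exp (-q * u)) atTop (𝓝 0) :=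
    tendsto_rpow_mul_exp_neg_mul_atTop_nhds_zero _ q hq
  have h := hG.comp hu
  apply h.congr'
  filter_upwards [self_mem_nhdsWithin] with c (hc : 0 < c)
  have hc0 : c ≠ 0 := hc.ne'
  show ((c ^ 2)⁻¹) ^ ((n : ℝ) / 2) * Real.exp (-q * (c ^ 2)⁻¹)
      = Real.exp (-(q / c ^ 2)) / c ^ n
  have h1 : ((c ^ 2)⁻¹ : ℝ) ^ ((n : ℝ) / 2) = (c ^ n)⁻¹ := by
    rw [← inv_pow, ← Real.rpow_natCast c⁻¹ 2, ← Real.rpow_mul (by positivity)]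
    rw [show ((2:ℕ):ℝ) * ((n:ℝ)/2) = (n:ℝ) by push_cast; ring]
    rw [Real.rpow_natCast, inv_pow]
  rw [h1, neg_mul, ← div_eq_mul_inv]
  ring

lemma tendsto_h1 {q : ℝ} (hq : 0 < q) :
    Tendsto (fun c => h1 c q) (𝓝[>] 0) (𝓝 (g1 q)) := by
  have hs0 : Real.sqrt q ≠ 0 := by positivity
  have herf : Tendsto (fun c : ℝ => erf (Real.sqrt q / c)) (𝓝[>] 0) (𝓝 1) := by
    apply erf_tendsto_one.comp
    have : Tendsto (fun c : ℝ => Real.sqrt q * c⁻¹) (𝓝[>] 0) atTop :=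
      (tendsto_inv_nhdsGT_zero).const_mul_atTop (by positivity)
    refine this.congr fun c => ?_
    rw [div_eq_mul_inv]
  have hexp : Tendsto (fun c : ℝ => Real.exp (-(q / c ^ 2)) / c ^ 1) (𝓝[>] 0) (𝓝 0) :=
    expLimit hq 1
  have hmain : Tendsto
      (fun c : ℝ => (2 / Real.sqrt π) * (1 / (2 * q)) * (Real.exp (-(q / c ^ 2)) / c ^ 1)
        - erf (Real.sqrt q / c) * (1 / (2 * Real.sqrt q * q)))
      (𝓝[>] 0)
      (𝓝 ((2 / Real.sqrt π) * (1 / (2 * q)) * 0 - 1 * (1 / (2 * Real.sqrt q * q)))) :=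
    ((hexp.const_mul _)).sub (herf.mul_const _)
  have heq : (fun c : ℝ => (2 / Real.sqrt π) * (1 / (2 * q)) * (Real.exp (-(q / c ^ 2)) / c ^ 1)
        - erf (Real.sqrt q / c) * (1 / (2 * Real.sqrt q * q)))
      =ᶠ[𝓝[>] 0] fun c => h1 c q := by
    filter_upwards [self_mem_nhdsWithin] with c (hc : 0 < c)
    have hy2 : (Real.sqrt q / c) ^ 2 = q / c ^ 2 := by
      rw [div_pow, Real.sq_sqrt hq.le]
    simp only [h1, Ef, hy2]
    have hpi : Real.sqrt π ≠ 0 := by positivity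
    field_simp
  have := hmain.congr' heq
  convert this using 2
  simp [g1]

lemma tendsto_h2 {q : ℝ} (hq : 0 < q) :
    Tendsto (fun c => h2 c q) (𝓝[>] 0) (𝓝 (g2 q)) := by
  have hs0 : Real.sqrt q ≠ 0 := by positivity
  have herf : Tendsto (fun c : ℝ => erf (Real.sqrt q / c)) (𝓝[>] 0) (𝓝 1) := by
    apply erf_tendsto_one.comp
    have : Tendsto (fun c : ℝ => Real.sqrt q * c⁻¹) (𝓝[>] 0) atTop :=
      (tendsto_inv_nhdsGT_zero).const_mul_atTop (by positivity)
    refine this.congr fun c => ?_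
    rw [div_eq_mul_inv]
  have hexp3 : Tendsto (fun c : ℝ => Real.exp (-(q / c ^ 2)) / c ^ 3) (𝓝[>] 0) (𝓝 0) :=
    expLimit hq 3
  have hexp1 : Tendsto (fun c : ℝ => Real.exp (-(q / c ^ 2)) / c ^ 1) (𝓝[>] 0) (𝓝 0) :=
    expLimit hq 1
  have hmain : Tendsto
      (fun c : ℝ =>
        -((2 / Real.sqrt π) * (1 / (2 * q))) * (Real.exp (-(q / c ^ 2)) / c ^ 3)
          - ((2 / Real.sqrt π) * (3 / (4 * q ^ 2))) * (Real.exp (-(q / c ^ 2)) / c ^ 1)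
          + erf (Real.sqrt q / c) * (3 * Real.sqrt q / (4 * q ^ 3)))
      (𝓝[>] 0)
      (𝓝 (-((2 / Real.sqrt π) * (1 / (2 * q))) * 0
          - ((2 / Real.sqrt π) * (3 / (4 * q ^ 2))) * 0
          + 1 * (3 * Real.sqrt q / (4 * q ^ 3)))) :=
    (((hexp3.const_mul _)).sub ((hexp1.const_mul _))).add (herf.mul_const _)
  have heq : (fun c : ℝ =>
        -((2 / Real.sqrt π) * (1 / (2 * q))) * (Real.exp (-(q / c ^ 2)) / c ^ 3)
          - ((2 / Real.sqrt π) * (3 / (4 * q ^ 2))) * (Real.exp (-(q / c ^ 2)) / c ^ 1)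
          + erf (Real.sqrt q / c) * (3 * Real.sqrt q / (4 * q ^ 3)))
      =ᶠ[𝓝[>] 0] fun c => h2 c q := by
    filter_upwards [self_mem_nhdsWithin] with c (hc : 0 < c)
    have hy2 : (Real.sqrt q / c) ^ 2 = q / c ^ 2 := by
      rw [div_pow, Real.sq_sqrt hq.le]
    simp only [h2, Ef, hy2]
    have hpi : Real.sqrt π ≠ 0 := by positivity
    field_simp
    ring
  have := hmain.congr' heq
  convert this using 2
  simp [g2]

lemma hasFDerivAt_normSq (y : E3) :
    HasFDerivAt (fun z : E3 => ‖z‖ ^ 2)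
      (2 • (innerSL ℝ y).comp (ContinuousLinearMap.id ℝ E3)) y :=
  (hasFDerivAt_id y).norm_sq

lemma inner_e3 (y : E3) (i : Fin 3) : (inner ℝ y (e3 i) : ℝ) = y i := by
  simp [e3, EuclideanSpace.inner_single_right]

lemma pd_comp_normSq (F F1 : ℝ → ℝ) (i : Fin 3) (y : E3) (hy : y ≠ 0)
    (hF : ∀ q, 0 < q → HasDerivAt F (F1 q) q) :
    pd i (fun z => F (‖z‖ ^ 2)) y = F1 (‖y‖ ^ 2) * (2 * y i) := by
  have hq : 0 < ‖y‖ ^ 2 := by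
    have := norm_pos_iff.mpr hy
    positivity
  have h := (hF _ hq).comp_hasFDerivAt y (hasFDerivAt_normSq y)
  rw [Function.comp_def] at h
  rw [pd, h.fderiv]
  have he : ∀ x : Fin 3, (e3 i) x = if x = i then 1 else 0 := by
    intro x; simp [e3, EuclideanSpace.single_apply]
  simp [he, Finset.mul_sum, Finset.sum_ite_eq, mul_comm, inner_e3]

lemma pd_pd_comp_normSq (F F1 F2 : ℝ → ℝ) (k i : Fin 3) (x : E3) (hx : x ≠ 0)
    (hF : ∀ q, 0 < q → HasDerivAt F (F1 q) q)
    (hF1 : ∀ q, 0 < q → HasDerivAt F1 (F2 q) q) :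
    pd k (fun y => pd i (fun z => F (‖z‖ ^ 2)) y) x
      = F2 (‖x‖ ^ 2) * (4 * x k * x i)
        + F1 (‖x‖ ^ 2) * (2 * (if k = i then 1 else 0)) := by
  have hq : 0 < ‖x‖ ^ 2 := by
    have := norm_pos_iff.mpr hx
    positivity
  have hev : (fun y => pd i (fun z => F (‖z‖ ^ 2)) y)
      =ᶠ[𝓝 x] fun y => F1 (‖y‖ ^ 2) * (2 * y i) := by
    filter_upwards [IsOpen.mem_nhds isOpen_compl_singleton hx] with y hy
    exact pd_comp_normSq F F1 i y hy hF
  rw [pd, hev.fderiv_eq]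
  have hc : HasFDerivAt (fun y : E3 => F1 (‖y‖ ^ 2))
      (F2 (‖x‖ ^ 2) • 2 • (innerSL ℝ x).comp (ContinuousLinearMap.id ℝ E3)) x := by
    have h := (hF1 _ hq).comp_hasFDerivAt x (hasFDerivAt_normSq x)
    rwa [Function.comp_def] at h
  have hd : HasFDerivAt (fun y : E3 => 2 * y i)
      ((2 : ℝ) • (EuclideanSpace.proj i : E3 →L[ℝ] ℝ)) x :=
    ((EuclideanSpace.proj i : E3 →L[ℝ] ℝ).hasFDerivAt).const_mul 2
  have hmul := hc.mul hd
  rw [show (fun y : E3 => F1 (‖y‖ ^ 2) * (2 * y i)) = (fun y => F1 (‖y‖ ^ 2)) * (fun y => 2 * y i) from rfl, hmul.fderiv]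
  have he : ∀ (j m : Fin 3), (e3 j) m = if m = j then 1 else 0 := by
    intro j m; simp [e3, EuclideanSpace.single_apply]
  simp [he, Finset.mul_sum, Finset.sum_ite_eq, mul_comm, inner_e3]
  rcases eq_or_ne k i with h | h
  · subst h; simp; ring
  · simp [h, Ne.symm h]
    ring

lemma stokesPot_eq (ν t : ℝ) (z : E3) :
    stokesPot ν z t = hfun (Real.sqrt (4 * ν * t)) (‖z‖ ^ 2) := by
  rw [stokesPot, hfun, Real.sqrt_sq (norm_nonneg z)]

lemma timeDeriv (ν t : ℝ) (hν : 0 < ν) (ht : 0 < t) (x : E3) (hx : x ≠ 0) :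
    deriv (fun s => stokesPot ν x s) t
      = -((2 / Real.sqrt π) * Real.exp (-(‖x‖ ^ 2 / Real.sqrt (4 * ν * t) ^ 2)) * (2 * ν)
          / Real.sqrt (4 * ν * t) ^ 3) := by
  have hw : 0 < 4 * ν * t := by positivity
  have hsw : (0:ℝ) < Real.sqrt (4 * ν * t) := Real.sqrt_pos.mpr hw
  have hr : (0:ℝ) < ‖x‖ := norm_pos_iff.mpr hx
  have h1 : HasDerivAt (fun s : ℝ => 4 * ν * s) (4 * ν) t := by
    simpa using (hasDerivAt_id t).const_mul (4 * ν)
  have h2 : HasDerivAt (fun s : ℝ => Real.sqrt (4 * ν * s))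
      (1 / (2 * Real.sqrt (4 * ν * t)) * (4 * ν)) t :=
    (Real.hasDerivAt_sqrt hw.ne').comp t h1
  have h3 : HasDerivAt (fun s : ℝ => ‖x‖ / Real.sqrt (4 * ν * s))
      ((0 * Real.sqrt (4 * ν * t) - ‖x‖ * (1 / (2 * Real.sqrt (4 * ν * t)) * (4 * ν)))
        / Real.sqrt (4 * ν * t) ^ 2) t :=
    (hasDerivAt_const t ‖x‖).div h2 hsw.ne'
  have h4 := ((hasDerivAt_erf _).comp t h3).div_const ‖x‖
  rw [Function.comp_def] at h4
  have h5 : deriv (fun s => stokesPot ν x s) t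
      = Ef (‖x‖ / Real.sqrt (4 * ν * t))
        * ((0 * Real.sqrt (4 * ν * t) - ‖x‖ * (1 / (2 * Real.sqrt (4 * ν * t)) * (4 * ν)))
            / Real.sqrt (4 * ν * t) ^ 2) / ‖x‖ := by
    rw [show (fun s => stokesPot ν x s) = fun s => erf (‖x‖ / Real.sqrt (4 * ν * s)) / ‖x‖
      from rfl]
    exact h4.deriv
  rw [h5]
  rw [Ef, show (‖x‖ / Real.sqrt (4 * ν * t)) ^ 2 = ‖x‖ ^ 2 / Real.sqrt (4 * ν * t) ^ 2
    from div_pow _ _ _]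
  field_simp
  ring

open Filter Topology in
/-- In the inviscid limit `ν → 0⁺` the time-dependent Stokeslet velocity converges to the
Eulerlet velocity `u^E_{ki}(x) = −(1/(4π)) ∂²(1/‖x‖)/∂x_k∂x_i`, for fixed `t > 0`, `x ≠ 0`. -/
theorem stokeslet_tendsto_eulerlet (i k : Fin 3) (t : ℝ) (ht : 0 < t)
    (x : E3) (hx : x ≠ 0) :
    Tendsto (fun ν => stokeslet ν k i x t) (𝓝[>] 0)
      (𝓝 (-(1 / (4 * π)) * pd k (fun y => pd i (fun z => 1 / ‖z‖) y) x)) := by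
  have hr : (0:ℝ) < ‖x‖ := norm_pos_iff.mpr hx
  have hq : (0:ℝ) < ‖x‖ ^ 2 := by positivity
  have hRHS : pd k (fun y => pd i (fun z => (1:ℝ) / ‖z‖) y) x
      = g2 (‖x‖ ^ 2) * (4 * x k * x i)
        + g1 (‖x‖ ^ 2) * (2 * (if k = i then 1 else 0)) := by
    have hgf : (fun z : E3 => (1:ℝ) / ‖z‖) = fun z => gf (‖z‖ ^ 2) := by
      funext z; rw [gf, Real.sqrt_sq (norm_nonneg z)]
    rw [hgf]
    exact pd_pd_comp_normSq gf g1 g2 k i x hx (fun q hq => hasDerivAt_gf hq)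
      (fun q hq => hasDerivAt_g1 hq)
  rw [hRHS]
  have hcmap : Tendsto (fun ν : ℝ => Real.sqrt (4 * ν * t)) (𝓝[>] 0) (𝓝[>] 0) := by
    apply tendsto_nhdsWithin_of_tendsto_nhds_of_eventually_within
    · have hcont : Continuous fun ν : ℝ => Real.sqrt (4 * ν * t) := by
        exact Real.continuous_sqrt.comp (by continuity)
      have := hcont.tendsto 0
      simpa using this.mono_left nhdsWithin_le_nhds
    · filter_upwards [self_mem_nhdsWithin] with ν (hν : 0 < ν)
      exact Real.sqrt_pos.mpr (by positivity)
  have hexp3 : Tendsto (fun ν : ℝ =>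
      Real.exp (-(‖x‖ ^ 2 / Real.sqrt (4 * ν * t) ^ 2)) / Real.sqrt (4 * ν * t) ^ 3)
      (𝓝[>] 0) (𝓝 0) := by
    have := (expLimit hq 3).comp hcmap
    simpa [Function.comp_def] using this
  have hh1 : Tendsto (fun ν : ℝ => h1 (Real.sqrt (4 * ν * t)) (‖x‖ ^ 2))
      (𝓝[>] 0) (𝓝 (g1 (‖x‖ ^ 2))) := by
    have := (tendsto_h1 hq).comp hcmap
    simpa [Function.comp_def] using this
  have hh2 : Tendsto (fun ν : ℝ => h2 (Real.sqrt (4 * ν * t)) (‖x‖ ^ 2))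
      (𝓝[>] 0) (𝓝 (g2 (‖x‖ ^ 2))) := by
    have := (tendsto_h2 hq).comp hcmap
    simpa [Function.comp_def] using this
  have hmain : Tendsto (fun ν : ℝ =>
      -(1 / (π * Real.sqrt π))
          * (Real.exp (-(‖x‖ ^ 2 / Real.sqrt (4 * ν * t) ^ 2)) / Real.sqrt (4 * ν * t) ^ 3)
          * (if k = i then 1 else 0)
        - 1 / (4 * π) * (h2 (Real.sqrt (4 * ν * t)) (‖x‖ ^ 2) * (4 * x k * x i)
            + h1 (Real.sqrt (4 * ν * t)) (‖x‖ ^ 2) * (2 * (if k = i then 1 else 0))))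
      (𝓝[>] 0)
      (𝓝 (-(1 / (π * Real.sqrt π)) * 0 * (if k = i then 1 else 0)
        - 1 / (4 * π) * (g2 (‖x‖ ^ 2) * (4 * x k * x i)
            + g1 (‖x‖ ^ 2) * (2 * (if k = i then 1 else 0))))) := by
    exact ((hexp3.const_mul _).mul_const _).sub
      (((hh2.mul_const _).add (hh1.mul_const _)).const_mul _)
  rw [show -(1 / (π * Real.sqrt π)) * 0 * (if k = i then (1:ℝ) else 0)
        - 1 / (4 * π) * (g2 (‖x‖ ^ 2) * (4 * x k * x i)
            + g1 (‖x‖ ^ 2) * (2 * (if k = i then 1 else 0)))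
      = -(1 / (4 * π)) * (g2 (‖x‖ ^ 2) * (4 * x k * x i)
            + g1 (‖x‖ ^ 2) * (2 * (if k = i then 1 else 0))) from by ring] at hmain
  apply Tendsto.congr' _ hmain
  filter_upwards [self_mem_nhdsWithin] with ν (hν : 0 < ν)
  have hw : (0:ℝ) < 4 * ν * t := by positivity
  have hsw : (0:ℝ) < Real.sqrt (4 * ν * t) := Real.sqrt_pos.mpr hw
  have hpd : pd k (fun y => pd i (fun z => stokesPot ν z t) y) x
      = h2 (Real.sqrt (4 * ν * t)) (‖x‖ ^ 2) * (4 * x k * x i)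
        + h1 (Real.sqrt (4 * ν * t)) (‖x‖ ^ 2) * (2 * (if k = i then 1 else 0)) := by
    simp only [stokesPot_eq ν t]
    exact pd_pd_comp_normSq _ _ _ k i x hx
      (fun q hq0 => hasDerivAt_hfun hsw hq0) (fun q hq0 => hasDerivAt_h1 hsw hq0)
  show _ = stokeslet ν k i x t
  rw [stokeslet, hpd, timeDeriv ν t hν ht x hx]
  have hpi : (0:ℝ) < π := Real.pi_pos
  have hspi : (0:ℝ) < Real.sqrt π := Real.sqrt_pos.mpr hpi
  set s := Real.sqrt (4 * ν * t) with hs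
  rcases eq_or_ne k i with hki | hki
  · simp only [hki, if_pos rfl]
    field_simp
    ring
  · simp only [if_neg hki]
    ring

end
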